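/- arXiv:0704.0125 — 7 statements merged into one kernel-verified Lean document; each statement's English description precedes it below -/
import Mathlib

section
/- For the cubic medium symbol A(η) = [[(τ−μ)η₁²+μ, (λ+μ)η₁η₂],[(λ+μ)η₁η₂, (τ−μ)η₂²+μ]] with τ, μ > 0 and −2μ−τ < λ < τ, the matrix A(η) is positive definite for every η ∈ S¹. -/
open Matrix

theorem posDef_fin_two_of_pos_of_det_pos {a b c : ℝ} (ha : 0 < a) (hdet : 0 < a * c - b ^ 2) :
    (!![a, b; b, c] : Matrix (Fin 2) (Fin 2) ℝ).PosDef := by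
  refine posDef_iff_dotProduct_mulVec.mpr ⟨?_, fun x hx => ?_⟩
  · ext i j
    fin_cases i <;> fin_cases j <;> rfl
  have hquad : star x ⬝ᵥ (!![a, b; b, c] *ᵥ x) = a * x 0 ^ 2 + 2 * b * x 0 * x 1 + c * x 1 ^ 2 := by
    simp only [dotProduct, Pi.star_apply, star_trivial, mulVec, of_apply, cons_val',
      cons_val_fin_one, Fin.sum_univ_two, cons_val_zero, cons_val_one]
    ring
  have hsq : a * (a * x 0 ^ 2 + 2 * b * x 0 * x 1 + c * x 1 ^ 2) =
      (a * x 0 + b * x 1) ^ 2 + (a * c - b ^ 2) * x 1 ^ 2 := by ring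
  rw [hquad]
  refine pos_of_mul_pos_right ?_ ha.le
  rw [hsq]
  rcases eq_or_ne (x 1) 0 with h1 | h1
  · have h0 : x 0 ≠ 0 := fun h0 => hx (funext fun i => by fin_cases i <;> assumption)
    simp only [h1, mul_zero, add_zero, ne_eq, OfNat.ofNat_ne_zero, not_false_eq_true, zero_pow]
    positivity
  · positivity

theorem four_mul_sq_mul_sq_le_one_of_sq_add_sq_eq_one {x y : ℝ} (h : x ^ 2 + y ^ 2 = 1) :
    4 * (x * y) ^ 2 ≤ 1 := by
  have := four_mul_le_sq_add (x ^ 2) (y ^ 2)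
  rw [h, one_pow] at this
  linarith [mul_pow x y 2]

theorem add_mul_sq_pos_of_sq_add_sq_eq_one {τ μ x y : ℝ} (hτ : 0 < τ) (hμ : 0 < μ)
    (h : x ^ 2 + y ^ 2 = 1) : 0 < τ * x ^ 2 + μ * y ^ 2 := by
  rcases eq_or_ne x 0 with rfl | hx
  · have hy : y ^ 2 = 1 := by simpa using h
    simpa [hy] using hμ
  · positivity

theorem one_sub_mul_add_mul_pos {s p q : ℝ} (hs₀ : 0 ≤ s) (hs₁ : s ≤ 1) (hp : 0 < p) (hq : 0 < q) :
    0 < (1 - s) * p + s * q := by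
  rcases le_total p q with hpq | hqp
  · nlinarith
  · nlinarith

/-- The cubic medium symbol `A(η)` is positive definite for every `η ∈ S¹`. -/
theorem cubic_symbol_posDef
    (τ μ lam : ℝ) (hτ : 0 < τ) (hμ : 0 < μ)
    (hlaml : -2 * μ - τ < lam) (hlamu : lam < τ)
    (η₁ η₂ : ℝ) (hη : η₁ ^ 2 + η₂ ^ 2 = 1) :
    (!![(τ - μ) * η₁ ^ 2 + μ, (lam + μ) * η₁ * η₂;
        (lam + μ) * η₁ * η₂, (τ - μ) * η₂ ^ 2 + μ] : Matrix (Fin 2) (Fin 2) ℝ).PosDef := by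
  apply posDef_fin_two_of_pos_of_det_pos
  · rw [show (τ - μ) * η₁ ^ 2 + μ = τ * η₁ ^ 2 + μ * η₂ ^ 2 by linear_combination (-μ) * hη]
    exact add_mul_sq_pos_of_sq_add_sq_eq_one hτ hμ hη
  · -- `s = 4 η₁² η₂² ∈ [0, 1]` interpolates between the determinant `τ μ` on the axes
    -- and `((τ + μ)² - (λ + μ)²) / 4` on the diagonals
    set s := 4 * (η₁ * η₂) ^ 2
    have hdet : ((τ - μ) * η₁ ^ 2 + μ) * ((τ - μ) * η₂ ^ 2 + μ) - ((lam + μ) * η₁ * η₂) ^ 2 =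
        (1 - s) * (τ * μ) + s * (((τ + μ) ^ 2 - (lam + μ) ^ 2) / 4) := by
      linear_combination μ * (τ - μ) * hη
    have hdiag : 0 < (τ + μ) ^ 2 - (lam + μ) ^ 2 := by
      rw [show (τ + μ) ^ 2 - (lam + μ) ^ 2 = (τ - lam) * (τ + 2 * μ + lam) by ring]
      exact mul_pos (by linarith) (by linarith)
    rw [hdet]
    exact one_sub_mul_add_mul_pos (by positivity)
      (four_mul_sq_mul_sq_le_one_of_sq_add_sq_eq_one hη) (mul_pos hτ hμ) (by positivity)
end

section
/- The characteristic polynomial of the matrix B(ξ) is det(νI − B(ξ)) = (ν − iκ|ξ|²)(ν² − κ₁(ξ))(ν² − κ₂(ξ)) − νγ²|ξ|²a₁²(η)(ν² − κ₂(ξ)) − νγ²|ξ|²a₂²(η)(ν² − κ₁(ξ)), where κ_j(ξ) = |ξ|²κ_j(η). -/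
open Matrix Complex

/-!
`νI − B` is an arrowhead matrix: diagonal `ν ∓ ωⱼ` bordered by a last row and column. Expanding,
its determinant is the corner entry times the diagonal product minus one term per border pair.
The diagonal entries pair up as `(ν − ωⱼ)(ν + ωⱼ) = ν² − |ξ|²κⱼ`, and the two border terms
belonging to `aⱼ` add up to `νγ²aⱼ²` times the remaining factor.
-/

theorem det_arrowhead_fin_five {R : Type*} [CommRing R]
    (d₁ d₂ d₃ d₄ c u₁ u₂ u₃ u₄ v₁ v₂ v₃ v₄ : R) :
    !![d₁, 0, 0, 0, u₁; 0, d₂, 0, 0, u₂; 0, 0, d₃, 0, u₃; 0, 0, 0, d₄, u₄;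
        v₁, v₂, v₃, v₄, c].det =
      c * d₁ * d₂ * d₃ * d₄ - u₁ * v₁ * d₂ * d₃ * d₄ - u₂ * v₂ * d₁ * d₃ * d₄
        - u₃ * v₃ * d₁ * d₂ * d₄ - u₄ * v₄ * d₁ * d₂ * d₃ := by
  simp [det_succ_row_zero, Fin.sum_univ_succ, Fin.succAbove]
  ring

theorem sq_mul_sqrt {R κ : ℝ} (hκ : 0 ≤ κ) : (R * √κ) ^ 2 = R ^ 2 * κ := by
  rw [mul_pow, Real.sq_sqrt hκ]

theorem charpolyB_general
    (κ γ : ℝ)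
    (κ₁ κ₂ : ℝ) (hκ₁ : 0 < κ₁) (hκ₂ : 0 < κ₂)
    (a₁η a₂η : ℝ)
    (R : ℝ)
    (ω₁ ω₂ a₁ a₂ : ℝ)
    (hω₁ : ω₁ = R * Real.sqrt κ₁) (hω₂ : ω₂ = R * Real.sqrt κ₂)
    (ha₁ : a₁ = R * a₁η) (ha₂ : a₂ = R * a₂η)
    (B : Matrix (Fin 5) (Fin 5) ℂ)
    (hB : B = !![(ω₁ : ℂ), 0, 0, 0, I * γ * a₁;
                 0, (ω₂ : ℂ), 0, 0, I * γ * a₂;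
                 0, 0, (-ω₁ : ℂ), 0, I * γ * a₁;
                 0, 0, 0, (-ω₂ : ℂ), I * γ * a₂;
                 -(I * γ / 2) * a₁, -(I * γ / 2) * a₂,
                 -(I * γ / 2) * a₁, -(I * γ / 2) * a₂, I * κ * R ^ 2])
    (ν : ℂ) :
    (ν • (1 : Matrix (Fin 5) (Fin 5) ℂ) - B).det =
      (ν - I * κ * R ^ 2) * (ν ^ 2 - R ^ 2 * κ₁) * (ν ^ 2 - R ^ 2 * κ₂)
        - ν * γ ^ 2 * R ^ 2 * a₁η ^ 2 * (ν ^ 2 - R ^ 2 * κ₂)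
        - ν * γ ^ 2 * R ^ 2 * a₂η ^ 2 * (ν ^ 2 - R ^ 2 * κ₁) := by
  have hω₁sq : (ω₁ : ℂ) ^ 2 = R ^ 2 * κ₁ := by
    exact_mod_cast hω₁ ▸ sq_mul_sqrt hκ₁.le
  have hω₂sq : (ω₂ : ℂ) ^ 2 = R ^ 2 * κ₂ := by
    exact_mod_cast hω₂ ▸ sq_mul_sqrt hκ₂.le
  have h_arrowhead : ν • (1 : Matrix (Fin 5) (Fin 5) ℂ) - B =
      !![ν - ω₁, 0, 0, 0, -(I * γ * a₁);
         0, ν - ω₂, 0, 0, -(I * γ * a₂);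
         0, 0, ν + ω₁, 0, -(I * γ * a₁);
         0, 0, 0, ν + ω₂, -(I * γ * a₂);
         I * γ / 2 * a₁, I * γ / 2 * a₂, I * γ / 2 * a₁, I * γ / 2 * a₂, ν - I * κ * R ^ 2] := by
    subst hB
    ext i j
    fin_cases i <;> fin_cases j <;> simp [one_apply]
  rw [h_arrowhead, det_arrowhead_fin_five, ← hω₁sq, ← hω₂sq, ha₁, ha₂]
  push_cast
  linear_combination
    (ν * γ ^ 2 * R ^ 2 * (a₁η ^ 2 * (ν ^ 2 - ω₂ ^ 2) + a₂η ^ 2 * (ν ^ 2 - ω₁ ^ 2))) * I_sq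

/-- The characteristic polynomial of `B(ξ)`:
`det(νI − B) = (ν − iκ|ξ|²)(ν² − κ₁(ξ))(ν² − κ₂(ξ))
  − νγ²|ξ|²a₁²(η)(ν² − κ₂(ξ)) − νγ²|ξ|²a₂²(η)(ν² − κ₁(ξ))`. -/
theorem charpolyB
    (κ γ : ℝ) (hκ : 0 < κ) (hγ : γ ≠ 0)
    (κ₁ κ₂ : ℝ) (hκ₁ : 0 < κ₁) (hκ₂ : 0 < κ₂)
    (a₁η a₂η : ℝ) (ha : a₁η ^ 2 + a₂η ^ 2 = 1)
    (R : ℝ) (hR : 0 < R)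
    (ω₁ ω₂ a₁ a₂ : ℝ)
    (hω₁ : ω₁ = R * Real.sqrt κ₁) (hω₂ : ω₂ = R * Real.sqrt κ₂)
    (ha₁ : a₁ = R * a₁η) (ha₂ : a₂ = R * a₂η)
    (B : Matrix (Fin 5) (Fin 5) ℂ)
    (hB : B = !![(ω₁ : ℂ), 0, 0, 0, I * γ * a₁;
                 0, (ω₂ : ℂ), 0, 0, I * γ * a₂;
                 0, 0, (-ω₁ : ℂ), 0, I * γ * a₁;
                 0, 0, 0, (-ω₂ : ℂ), I * γ * a₂;
                 -(I * γ / 2) * a₁, -(I * γ / 2) * a₂,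
                 -(I * γ / 2) * a₁, -(I * γ / 2) * a₂, I * κ * R ^ 2])
    (ν : ℂ) :
    (ν • (1 : Matrix (Fin 5) (Fin 5) ℂ) - B).det =
      (ν - I * κ * R ^ 2) * (ν ^ 2 - R ^ 2 * κ₁) * (ν ^ 2 - R ^ 2 * κ₂)
        - ν * γ ^ 2 * R ^ 2 * a₁η ^ 2 * (ν ^ 2 - R ^ 2 * κ₂)
        - ν * γ ^ 2 * R ^ 2 * a₂η ^ 2 * (ν ^ 2 - R ^ 2 * κ₁) :=
  charpolyB_general κ γ κ₁ κ₂ hκ₁ hκ₂ a₁η a₂η R ω₁ ω₂ a₁ a₂ hω₁ hω₂ ha₁ ha₂ B hB ν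
end

section
/- For ξ ≠ 0, an eigenvalue ν of B(ξ) is real if and only if ν² = κ_{j₀}(ξ) for some index j₀ ∈ {1,2}. Moreover, if the two eigenvalues κ₁(ξ), κ₂(ξ) are distinct (the direction is non-degenerate), then ν² = κ_{j₀}(ξ) for a real eigenvalue ν is equivalent to a_{j₀}(η) = 0. -/
/-!
Expanding the arrowhead determinant gives the characteristic polynomial
`P(ν) = (ν - iκ)(ν² - c₁)(ν² - c₂) - νγ²(b₁(ν² - c₂) + b₂(ν² - c₁))` with real coefficients apart
from the single `iκ`. For real `ν`, `P(ν) - conj P(ν) = -2iκ(ν² - c₁)(ν² - c₂)`, so `ν² ∈ {c₁, c₂}`;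
conversely `ν² = c > 0` forces `ν = ±√c`. Substituting `ν² = c₁` into `P` leaves
`νγ²b₁(c₂ - c₁)`, so `b₁ = 0` when `c₁ ≠ c₂`; and `b₁ = 0` excludes `ν² = c₂`, since that would
force `b₂ = 0` as well, contradicting `a₁² + a₂² = 1`.
-/

open Matrix Complex

theorem det_arrowhead_five {R : Type*} [CommRing R] (d₁ d₂ d₃ d₄ e u₁ u₂ u₃ u₄ v₁ v₂ v₃ v₄ : R) :
    det !![d₁, 0, 0, 0, u₁; 0, d₂, 0, 0, u₂; 0, 0, d₃, 0, u₃; 0, 0, 0, d₄, u₄;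
      v₁, v₂, v₃, v₄, e] =
      e * d₁ * d₂ * d₃ * d₄ - u₁ * v₁ * d₂ * d₃ * d₄ - u₂ * v₂ * d₁ * d₃ * d₄
        - u₃ * v₃ * d₁ * d₂ * d₄ - u₄ * v₄ * d₁ * d₂ * d₃ := by
  simp [det_succ_row_zero, Fin.sum_univ_succ, Fin.succAbove]
  ring

/-- In the paper's notation `κ, c_j, b_j` stand for `κ|ξ|²`, `κ_j(ξ)` and `|ξ|²a_j(η)²`. -/
noncomputable def thermoelasticCharPoly (κ γ c₁ c₂ b₁ b₂ : ℝ) (ν : ℂ) : ℂ :=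
  (ν - I * κ) * (ν ^ 2 - c₁) * (ν ^ 2 - c₂) - ν * γ ^ 2 * (b₁ * (ν ^ 2 - c₂) + b₂ * (ν ^ 2 - c₁))

theorem det_smul_one_sub_B (κ γ ω₁ ω₂ a₁ a₂ R : ℝ) (ν : ℂ) :
    (ν • (1 : Matrix (Fin 5) (Fin 5) ℂ) -
      !![(ω₁ : ℂ), 0, 0, 0, I * γ * a₁;
         0, (ω₂ : ℂ), 0, 0, I * γ * a₂;
         0, 0, (-ω₁ : ℂ), 0, I * γ * a₁;
         0, 0, 0, (-ω₂ : ℂ), I * γ * a₂;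
         -(I * γ / 2) * a₁, -(I * γ / 2) * a₂,
         -(I * γ / 2) * a₁, -(I * γ / 2) * a₂, I * κ * R ^ 2]).det =
      thermoelasticCharPoly (κ * R ^ 2) γ (ω₁ ^ 2) (ω₂ ^ 2) (a₁ ^ 2) (a₂ ^ 2) ν := by
  have hM : ν • (1 : Matrix (Fin 5) (Fin 5) ℂ) -
      !![(ω₁ : ℂ), 0, 0, 0, I * γ * a₁;
         0, (ω₂ : ℂ), 0, 0, I * γ * a₂;
         0, 0, (-ω₁ : ℂ), 0, I * γ * a₁;
         0, 0, 0, (-ω₂ : ℂ), I * γ * a₂;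
         -(I * γ / 2) * a₁, -(I * γ / 2) * a₂,
         -(I * γ / 2) * a₁, -(I * γ / 2) * a₂, I * κ * R ^ 2] =
      !![ν - ω₁, 0, 0, 0, -(I * γ * a₁);
         0, ν - ω₂, 0, 0, -(I * γ * a₂);
         0, 0, ν + ω₁, 0, -(I * γ * a₁);
         0, 0, 0, ν + ω₂, -(I * γ * a₂);
         I * γ / 2 * a₁, I * γ / 2 * a₂, I * γ / 2 * a₁, I * γ / 2 * a₂, ν - I * κ * R ^ 2] := by
    ext i j
    fin_cases i <;> fin_cases j <;> simp [one_apply]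
  rw [hM, det_arrowhead_five, thermoelasticCharPoly]
  push_cast
  linear_combination
    (γ : ℂ) ^ 2 * ν * (a₁ ^ 2 * (ν ^ 2 - ω₂ ^ 2) + a₂ ^ 2 * (ν ^ 2 - ω₁ ^ 2)) * I_sq

theorem thermoelasticCharPoly_swap (κ γ c₁ c₂ b₁ b₂ : ℝ) (ν : ℂ) :
    thermoelasticCharPoly κ γ c₂ c₁ b₂ b₁ ν = thermoelasticCharPoly κ γ c₁ c₂ b₁ b₂ ν := by
  unfold thermoelasticCharPoly; ring

theorem im_eq_zero_of_sq_eq_ofReal {c : ℝ} (hc : 0 ≤ c) {ν : ℂ} (h : ν ^ 2 = c) :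
    ν.im = 0 := by
  have hsq : ν ^ 2 = ((√c : ℝ) : ℂ) ^ 2 := by rw [← ofReal_pow, Real.sq_sqrt hc, h]
  rcases sq_eq_sq_iff_eq_or_eq_neg.mp hsq with h | h <;> simp [h]

section
variable {κ γ c₁ c₂ b₁ b₂ : ℝ} {ν : ℂ}

theorem sq_eq_or_sq_eq_of_im_eq_zero (hκ : κ ≠ 0)
    (hP : thermoelasticCharPoly κ γ c₁ c₂ b₁ b₂ ν = 0) (hν : ν.im = 0) : ν ^ 2 = c₁ ∨ ν ^ 2 = c₂ := by
  have hconj : starRingEnd ℂ ν = ν := Complex.conj_eq_iff_im.mpr hν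
  have hP' := congrArg (starRingEnd ℂ) hP
  simp only [thermoelasticCharPoly, map_sub, map_mul, map_add, map_pow, map_zero, conj_ofReal,
    conj_I, hconj] at hP'
  have hprod : (2 * I * κ) * ((ν ^ 2 - c₁) * (ν ^ 2 - c₂)) = 0 := by
    unfold thermoelasticCharPoly at hP
    linear_combination hP' - hP
  have h2Iκ : (2 * I * κ : ℂ) ≠ 0 := by simp [hκ]
  rcases mul_eq_zero.mp ((mul_eq_zero.mp hprod).resolve_left h2Iκ) with h | h
  · exact .inl (sub_eq_zero.mp h)
  · exact .inr (sub_eq_zero.mp h)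

theorem coupling_eq_zero_of_sq_eq (hγ : γ ≠ 0) (hc₁ : c₁ ≠ 0) (hc : c₁ ≠ c₂)
    (hP : thermoelasticCharPoly κ γ c₁ c₂ b₁ b₂ ν = 0) (hν : ν ^ 2 = c₁) : b₁ = 0 := by
  have hprod : ν * γ ^ 2 * ((c₁ - c₂ : ℝ) * b₁ : ℂ) = 0 := by
    unfold thermoelasticCharPoly at hP
    push_cast
    linear_combination -hP + ((ν - I * κ) * (ν ^ 2 - c₂) - ν * γ ^ 2 * (b₁ + b₂)) * hν
  have hν0 : ν ≠ 0 := by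
    rintro rfl
    exact hc₁ (by exact_mod_cast hν.symm.trans (zero_pow two_ne_zero))
  have hcb := (mul_eq_zero.mp hprod).resolve_left (by simp [hν0, hγ])
  exact_mod_cast (mul_eq_zero.mp hcb).resolve_left (by exact_mod_cast sub_ne_zero.mpr hc)

theorem sq_eq_iff_coupling_eq_zero (hκ : κ ≠ 0) (hγ : γ ≠ 0) (hc₁ : c₁ ≠ 0)
    (hc₂ : c₂ ≠ 0) (hc : c₁ ≠ c₂) (hb : b₁ ≠ 0 ∨ b₂ ≠ 0)
    (hP : thermoelasticCharPoly κ γ c₁ c₂ b₁ b₂ ν = 0) (hν : ν.im = 0) :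
    ν ^ 2 = c₁ ↔ b₁ = 0 := by
  refine ⟨coupling_eq_zero_of_sq_eq hγ hc₁ hc hP, fun hb₁ => ?_⟩
  refine (sq_eq_or_sq_eq_of_im_eq_zero hκ hP hν).resolve_right fun h₂ => ?_
  exact hb.elim (· hb₁)
    (· (coupling_eq_zero_of_sq_eq hγ hc₂ hc.symm ((thermoelasticCharPoly_swap ..).trans hP) h₂))

end

/-- For `ξ ≠ 0`, an eigenvalue `ν` of `B(ξ)` is real iff `ν² = κ_{j₀}(ξ)` for some
index `j₀`; if moreover `κ₁ ≠ κ₂` (non-degenerate direction) this is equivalent to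
`a_{j₀}(η) = 0`. -/
theorem real_eigenvalues_B
    (κ γ : ℝ) (hκ : 0 < κ) (hγ : γ ≠ 0)
    (κ₁ κ₂ : ℝ) (hκ₁ : 0 < κ₁) (hκ₂ : 0 < κ₂)
    (a₁η a₂η : ℝ) (ha : a₁η ^ 2 + a₂η ^ 2 = 1)
    (R : ℝ) (hR : 0 < R)
    (ω₁ ω₂ a₁ a₂ : ℝ)
    (hω₁ : ω₁ = R * Real.sqrt κ₁) (hω₂ : ω₂ = R * Real.sqrt κ₂)
    (ha₁ : a₁ = R * a₁η) (ha₂ : a₂ = R * a₂η)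
    (B : Matrix (Fin 5) (Fin 5) ℂ)
    (hB : B = !![(ω₁ : ℂ), 0, 0, 0, I * γ * a₁;
                 0, (ω₂ : ℂ), 0, 0, I * γ * a₂;
                 0, 0, (-ω₁ : ℂ), 0, I * γ * a₁;
                 0, 0, 0, (-ω₂ : ℂ), I * γ * a₂;
                 -(I * γ / 2) * a₁, -(I * γ / 2) * a₂,
                 -(I * γ / 2) * a₁, -(I * γ / 2) * a₂, I * κ * R ^ 2])
    (ν : ℂ) (hν : (ν • (1 : Matrix (Fin 5) (Fin 5) ℂ) - B).det = 0) :
    (ν.im = 0 ↔ ν ^ 2 = (R ^ 2 * κ₁ : ℝ) ∨ ν ^ 2 = (R ^ 2 * κ₂ : ℝ)) ∧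
      (κ₁ ≠ κ₂ → ν.im = 0 →
        ((ν ^ 2 = (R ^ 2 * κ₁ : ℝ) ↔ a₁η = 0) ∧
         (ν ^ 2 = (R ^ 2 * κ₂ : ℝ) ↔ a₂η = 0))) := by
  subst hB hω₁ hω₂ ha₁ ha₂
  rw [det_smul_one_sub_B, mul_pow, mul_pow, mul_pow, mul_pow, Real.sq_sqrt hκ₁.le,
    Real.sq_sqrt hκ₂.le] at hν
  have hκR : κ * R ^ 2 ≠ 0 := by positivity
  have hc₁ : R ^ 2 * κ₁ ≠ 0 := by positivity
  have hc₂ : R ^ 2 * κ₂ ≠ 0 := by positivity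
  have hb : R ^ 2 * a₁η ^ 2 ≠ 0 ∨ R ^ 2 * a₂η ^ 2 ≠ 0 := by
    by_contra! h
    simp_all [hR.ne']
  refine ⟨⟨sq_eq_or_sq_eq_of_im_eq_zero hκR hν, ?_⟩, fun hκ₁₂ hν_real => ?_⟩
  · rintro (h | h) <;> exact im_eq_zero_of_sq_eq_ofReal (by positivity) h
  have hc : R ^ 2 * κ₁ ≠ R ^ 2 * κ₂ := by simpa [hR.ne'] using hκ₁₂
  have h₁ := sq_eq_iff_coupling_eq_zero hκR hγ hc₁ hc₂ hc hb hν hν_real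
  have h₂ := sq_eq_iff_coupling_eq_zero hκR hγ hc₂ hc₁ hc.symm hb.symm
    ((thermoelasticCharPoly_swap ..).trans hν) hν_real
  simp only [mul_eq_zero, pow_eq_zero_iff two_ne_zero, hR.ne', false_or] at h₁ h₂
  exact ⟨h₁, h₂⟩
end

section
/- Let η̄ be a non-degenerate direction hyperbolic with respect to index 1 (a₁(η̄) = 0, κ₁(η̄) ≠ κ₂(η̄)). Then, as η → η̄ nontangentially, lim a₁²(ξ)/(ν±²(ξ) − κ₁(ξ)) = C ∓ iD|ξ| where γ²C = 1 − γ²/(κ₁(η̄) − κ₂(η̄)) and γ²D = κ/ω₁(η̄) > 0, provided the hyperbolic eigenvalues ν±(ξ) → ±|ξ|ω₁(η̄) and satisfy the secular equation 1 = iκ|ξ|²/ν + γ²a₁²(ξ)/(ν² − κ₁(ξ)) + γ²a₂²(ξ)/(ν² − κ₂(ξ)). -/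
/-!
Solving the secular equation for its `a₁` term writes `a₁²/(ν² − κ₁)` through `1/ν` and
`a₂²/(ν² − κ₂)`. Both converge: `a₂² = 1 − a₁² → 1`, and at `ν → ±|ξ|ω₁(η̄)` the denominator
`ν² − |ξ|²κ₂` tends to `|ξ|²(κ₁(η̄) − κ₂(η̄)) ≠ 0`. Evaluating the limit there gives `C ∓ iD|ξ|`.
-/

open Filter Complex Topology

theorem tendsto_sq_of_sq_add_sq_eq_one {ι 𝕜 : Type*} [Ring 𝕜] [TopologicalSpace 𝕜]
    [IsTopologicalRing 𝕜] {l : Filter ι} {a b : ι → 𝕜}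
    (hab : ∀ n, a n ^ 2 + b n ^ 2 = 1) (ha : Tendsto a l (𝓝 0)) :
    Tendsto (fun n => b n ^ 2) l (𝓝 1) := by
  have h : Tendsto (fun n => 1 - a n ^ 2) l (𝓝 (1 - 0 ^ 2)) := tendsto_const_nhds.sub (ha.pow 2)
  rw [zero_pow two_ne_zero, sub_zero] at h
  exact h.congr fun n => (eq_sub_of_add_eq' (hab n)).symm

def IsSecularRoot (κ γ R κ₁ κ₂ a₁ a₂ : ℝ) (ν : ℂ) : Prop :=
  1 = I * κ * R ^ 2 / ν + γ ^ 2 * ((R * a₁ : ℝ) : ℂ) ^ 2 / (ν ^ 2 - (R ^ 2 * κ₁ : ℝ))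
    + γ ^ 2 * ((R * a₂ : ℝ) : ℂ) ^ 2 / (ν ^ 2 - (R ^ 2 * κ₂ : ℝ))

noncomputable def secularLimit (κ γ R κ₂b : ℝ) (L : ℂ) : ℂ :=
  (1 - I * κ * R ^ 2 / L - γ ^ 2 * R ^ 2 / (L ^ 2 - R ^ 2 * κ₂b)) / γ ^ 2

section Secular

variable {ι : Type*} {l : Filter ι} {κ γ R : ℝ} {κ₁ κ₂ a₁ a₂ : ι → ℝ} {κ₂b : ℝ} {ν : ι → ℂ}

theorem tendsto_secular_term {L : ℂ} (hγ : γ ≠ 0) (hκ₂ : Tendsto κ₂ l (𝓝 κ₂b))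
    (hsum : ∀ n, a₁ n ^ 2 + a₂ n ^ 2 = 1) (ha₁ : Tendsto a₁ l (𝓝 0))
    (hν : Tendsto ν l (𝓝 L)) (hL : L ≠ 0) (hL₂ : L ^ 2 - R ^ 2 * κ₂b ≠ 0)
    (hsec : ∀ n, IsSecularRoot κ γ R (κ₁ n) (κ₂ n) (a₁ n) (a₂ n) (ν n)) :
    Tendsto (fun n => ((R * a₁ n : ℝ) : ℂ) ^ 2 / (ν n ^ 2 - (R ^ 2 * κ₁ n : ℝ)))
      l (𝓝 (secularLimit κ γ R κ₂b L)) := by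
  have hγ₂ : (γ : ℂ) ^ 2 ≠ 0 := by exact_mod_cast pow_ne_zero 2 hγ
  have hsolve : ∀ n, ((R * a₁ n : ℝ) : ℂ) ^ 2 / (ν n ^ 2 - (R ^ 2 * κ₁ n : ℝ)) =
      (1 - I * κ * R ^ 2 / ν n
        - γ ^ 2 * (R ^ 2 * (a₂ n ^ 2 : ℝ)) / (ν n ^ 2 - R ^ 2 * (κ₂ n : ℂ))) / γ ^ 2 := by
    intro n
    rw [eq_div_iff hγ₂]
    have hn := hsec n
    unfold IsSecularRoot at hn
    push_cast at hn ⊢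
    linear_combination -hn
  have ha₂ : Tendsto (fun n => ((a₂ n ^ 2 : ℝ) : ℂ)) l (𝓝 ((1 : ℝ) : ℂ)) :=
    (tendsto_sq_of_sq_add_sq_eq_one hsum ha₁).ofReal
  have hden : Tendsto (fun n => ν n ^ 2 - R ^ 2 * (κ₂ n : ℂ)) l (𝓝 (L ^ 2 - R ^ 2 * κ₂b)) :=
    (hν.pow 2).sub (tendsto_const_nhds.mul hκ₂.ofReal)
  have hlim : Tendsto (fun n => (1 - I * κ * R ^ 2 / ν n
        - γ ^ 2 * (R ^ 2 * (a₂ n ^ 2 : ℝ)) / (ν n ^ 2 - R ^ 2 * (κ₂ n : ℂ))) / γ ^ 2) l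
      (𝓝 ((1 - I * κ * R ^ 2 / L - γ ^ 2 * (R ^ 2 * ((1 : ℝ) : ℂ)) / (L ^ 2 - R ^ 2 * κ₂b))
        / γ ^ 2)) :=
    ((tendsto_const_nhds.sub (tendsto_const_nhds.div hν hL)).sub
      ((tendsto_const_nhds.mul (tendsto_const_nhds.mul ha₂)).div hden hL₂)).div_const _
  rw [ofReal_one, mul_one] at hlim
  exact hlim.congr fun n => (hsolve n).symm

theorem secularLimit_hyperbolic {κ₁b C D ε : ℝ} (hε : ε ^ 2 = 1) (hγ : γ ≠ 0)
    (hR : R ≠ 0) (hκ₁b : 0 < κ₁b) (hnd : κ₁b ≠ κ₂b)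
    (hC : γ ^ 2 * C = 1 - γ ^ 2 / (κ₁b - κ₂b)) (hD : γ ^ 2 * D = κ / Real.sqrt κ₁b) :
    secularLimit κ γ R κ₂b ((ε * (R * Real.sqrt κ₁b) : ℝ)) = C - ε * I * D * R := by
  have hγc : (γ : ℂ) ≠ 0 := by exact_mod_cast hγ
  have hCc : (C : ℂ) = (1 - γ ^ 2 / (κ₁b - κ₂b)) / γ ^ 2 := by
    rw [eq_div_iff (pow_ne_zero 2 hγc)]; exact_mod_cast (mul_comm _ _).trans hC
  have hDc : (D : ℂ) = κ / Real.sqrt κ₁b / γ ^ 2 := by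
    rw [eq_div_iff (pow_ne_zero 2 hγc)]; exact_mod_cast (mul_comm _ _).trans hD
  have hsub : (κ₁b : ℂ) - κ₂b ≠ 0 := by exact_mod_cast sub_ne_zero.mpr hnd
  have hs : (Real.sqrt κ₁b : ℂ) ≠ 0 := by exact_mod_cast (Real.sqrt_pos.mpr hκ₁b).ne'
  have hsq : (Real.sqrt κ₁b : ℂ) ^ 2 = κ₁b := by exact_mod_cast Real.sq_sqrt hκ₁b.le
  have hεc : (ε : ℂ) ^ 2 = 1 := by exact_mod_cast hε
  have hε0 : (ε : ℂ) ≠ 0 := by rintro h; simp [h] at hεc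
  have hRc : (R : ℂ) ≠ 0 := by exact_mod_cast hR
  rw [secularLimit, hCc, hDc]
  push_cast
  rw [mul_pow, mul_pow, hsq, hεc]
  field_simp
  linear_combination I * κ * R * (κ₁b - κ₂b) * hεc

theorem tendsto_secular_term_hyperbolic {κ₁b C D ε : ℝ} (hε : ε ^ 2 = 1) (hγ : γ ≠ 0)
    (hR : R ≠ 0) (hκ₁b : 0 < κ₁b) (hnd : κ₁b ≠ κ₂b) (hκ₂ : Tendsto κ₂ l (𝓝 κ₂b))
    (hsum : ∀ n, a₁ n ^ 2 + a₂ n ^ 2 = 1) (ha₁ : Tendsto a₁ l (𝓝 0))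
    (hν : Tendsto ν l (𝓝 ((ε * (R * Real.sqrt κ₁b) : ℝ) : ℂ)))
    (hsec : ∀ n, IsSecularRoot κ γ R (κ₁ n) (κ₂ n) (a₁ n) (a₂ n) (ν n))
    (hC : γ ^ 2 * C = 1 - γ ^ 2 / (κ₁b - κ₂b)) (hD : γ ^ 2 * D = κ / Real.sqrt κ₁b) :
    Tendsto (fun n => ((R * a₁ n : ℝ) : ℂ) ^ 2 / (ν n ^ 2 - (R ^ 2 * κ₁ n : ℝ)))
      l (𝓝 (C - ε * I * D * R)) := by
  have hε0 : ε ≠ 0 := by rintro rfl; norm_num at hε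
  have hsq : (ε * (R * Real.sqrt κ₁b)) ^ 2 = R ^ 2 * κ₁b := by
    rw [mul_pow, mul_pow, hε, Real.sq_sqrt hκ₁b.le, one_mul]
  have hL : ((ε * (R * Real.sqrt κ₁b) : ℝ) : ℂ) ≠ 0 := by
    have hs : Real.sqrt κ₁b ≠ 0 := (Real.sqrt_pos.mpr hκ₁b).ne'
    exact_mod_cast mul_ne_zero hε0 (mul_ne_zero hR hs)
  have hL₂ : ((ε * (R * Real.sqrt κ₁b) : ℝ) : ℂ) ^ 2 - R ^ 2 * κ₂b ≠ 0 := by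
    have hne : (ε * (R * Real.sqrt κ₁b)) ^ 2 - R ^ 2 * κ₂b ≠ 0 := by
      rw [hsq, ← mul_sub]; exact mul_ne_zero (pow_ne_zero 2 hR) (sub_ne_zero.mpr hnd)
    exact_mod_cast hne
  rw [← secularLimit_hyperbolic hε hγ hR hκ₁b hnd hC hD]
  exact tendsto_secular_term hγ hκ₂ hsum ha₁ hν hL hL₂ hsec

end Secular

theorem hyperbolic_eigenvalue_limit_general
    {ι : Type*} (l : Filter ι)
    (κ γ R : ℝ) (hκ : 0 < κ) (hγ : γ ≠ 0) (hR : 0 < R)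
    (κ₁ κ₂ a₁ a₂ : ι → ℝ) (κ₁b κ₂b : ℝ)
    (hκ₁b : 0 < κ₁b) (hnd : κ₁b ≠ κ₂b)
    (hκ₂ : Tendsto κ₂ l (nhds κ₂b))
    (hsum : ∀ n, a₁ n ^ 2 + a₂ n ^ 2 = 1)
    (ha₁ : Tendsto a₁ l (nhds 0))
    (νp νm : ι → ℂ)
    (hνp : Tendsto νp l (nhds ((R * Real.sqrt κ₁b : ℝ) : ℂ)))
    (hνm : Tendsto νm l (nhds ((-(R * Real.sqrt κ₁b) : ℝ) : ℂ)))
    (hsecp : ∀ n, (1 : ℂ) = I * κ * R ^ 2 / νp n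
        + γ ^ 2 * ((R * a₁ n : ℝ) : ℂ) ^ 2 / (νp n ^ 2 - (R ^ 2 * κ₁ n : ℝ))
        + γ ^ 2 * ((R * a₂ n : ℝ) : ℂ) ^ 2 / (νp n ^ 2 - (R ^ 2 * κ₂ n : ℝ)))
    (hsecm : ∀ n, (1 : ℂ) = I * κ * R ^ 2 / νm n
        + γ ^ 2 * ((R * a₁ n : ℝ) : ℂ) ^ 2 / (νm n ^ 2 - (R ^ 2 * κ₁ n : ℝ))
        + γ ^ 2 * ((R * a₂ n : ℝ) : ℂ) ^ 2 / (νm n ^ 2 - (R ^ 2 * κ₂ n : ℝ)))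
    (C D : ℝ)
    (hC : γ ^ 2 * C = 1 - γ ^ 2 / (κ₁b - κ₂b))
    (hD : γ ^ 2 * D = κ / Real.sqrt κ₁b) :
    0 < D ∧
    Tendsto (fun n => ((R * a₁ n : ℝ) : ℂ) ^ 2 / (νp n ^ 2 - (R ^ 2 * κ₁ n : ℝ)))
      l (nhds ((C : ℂ) - I * D * R)) ∧
    Tendsto (fun n => ((R * a₁ n : ℝ) : ℂ) ^ 2 / (νm n ^ 2 - (R ^ 2 * κ₁ n : ℝ)))
      l (nhds ((C : ℂ) + I * D * R)) := by
  have hD₀ : 0 < D :=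
    pos_of_mul_pos_right (hD ▸ div_pos hκ (Real.sqrt_pos.mpr hκ₁b)) (sq_nonneg γ)
  have hp := tendsto_secular_term_hyperbolic (ε := 1) (one_pow 2) hγ hR.ne' hκ₁b hnd hκ₂ hsum ha₁
    (by rwa [one_mul]) hsecp hC hD
  have hm := tendsto_secular_term_hyperbolic (ε := -1) (by norm_num) hγ hR.ne' hκ₁b hnd hκ₂ hsum
    ha₁ (by rwa [neg_one_mul]) hsecm hC hD
  exact ⟨hD₀, by simpa using hp, by simpa using hm⟩

/-- Near a non-degenerate direction `η̄` hyperbolic with respect to index 1, the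
non-tangential limits `a₁²(ξ)/(ν±²(ξ) − κ₁(ξ)) → C ∓ iD|ξ|` hold, where
`γ²C = 1 − γ²/(κ₁(η̄) − κ₂(η̄))` and `γ²D = κ/ω₁(η̄) > 0`, provided the hyperbolic
eigenvalues `ν±` tend to `±|ξ|ω₁(η̄)` and satisfy the secular equation. -/
theorem hyperbolic_eigenvalue_limit
    {ι : Type*} (l : Filter ι) [l.NeBot]
    (κ γ R : ℝ) (hκ : 0 < κ) (hγ : γ ≠ 0) (hR : 0 < R)
    (κ₁ κ₂ a₁ a₂ : ι → ℝ) (κ₁b κ₂b : ℝ)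
    (hκ₁b : 0 < κ₁b) (hκ₂b : 0 < κ₂b) (hnd : κ₁b ≠ κ₂b)
    (hκ₁ : Tendsto κ₁ l (nhds κ₁b)) (hκ₂ : Tendsto κ₂ l (nhds κ₂b))
    (hsum : ∀ n, a₁ n ^ 2 + a₂ n ^ 2 = 1)
    (ha₁ : Tendsto a₁ l (nhds 0))
    (νp νm : ι → ℂ)
    (hνp : Tendsto νp l (nhds ((R * Real.sqrt κ₁b : ℝ) : ℂ)))
    (hνm : Tendsto νm l (nhds ((-(R * Real.sqrt κ₁b) : ℝ) : ℂ)))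
    (hνp0 : ∀ n, νp n ≠ 0) (hνm0 : ∀ n, νm n ≠ 0)
    (hνp1 : ∀ n, νp n ^ 2 ≠ ((R ^ 2 * κ₁ n : ℝ) : ℂ))
    (hνp2 : ∀ n, νp n ^ 2 ≠ ((R ^ 2 * κ₂ n : ℝ) : ℂ))
    (hνm1 : ∀ n, νm n ^ 2 ≠ ((R ^ 2 * κ₁ n : ℝ) : ℂ))
    (hνm2 : ∀ n, νm n ^ 2 ≠ ((R ^ 2 * κ₂ n : ℝ) : ℂ))
    (hsecp : ∀ n, (1 : ℂ) = I * κ * R ^ 2 / νp n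
        + γ ^ 2 * ((R * a₁ n : ℝ) : ℂ) ^ 2 / (νp n ^ 2 - (R ^ 2 * κ₁ n : ℝ))
        + γ ^ 2 * ((R * a₂ n : ℝ) : ℂ) ^ 2 / (νp n ^ 2 - (R ^ 2 * κ₂ n : ℝ)))
    (hsecm : ∀ n, (1 : ℂ) = I * κ * R ^ 2 / νm n
        + γ ^ 2 * ((R * a₁ n : ℝ) : ℂ) ^ 2 / (νm n ^ 2 - (R ^ 2 * κ₁ n : ℝ))
        + γ ^ 2 * ((R * a₂ n : ℝ) : ℂ) ^ 2 / (νm n ^ 2 - (R ^ 2 * κ₂ n : ℝ)))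
    (C D : ℝ)
    (hC : γ ^ 2 * C = 1 - γ ^ 2 / (κ₁b - κ₂b))
    (hD : γ ^ 2 * D = κ / Real.sqrt κ₁b) :
    0 < D ∧
    Tendsto (fun n => ((R * a₁ n : ℝ) : ℂ) ^ 2 / (νp n ^ 2 - (R ^ 2 * κ₁ n : ℝ)))
      l (nhds ((C : ℂ) - I * D * R)) ∧
    Tendsto (fun n => ((R * a₁ n : ℝ) : ℂ) ^ 2 / (νm n ^ 2 - (R ^ 2 * κ₁ n : ℝ)))
      l (nhds ((C : ℂ) + I * D * R)) :=
  hyperbolic_eigenvalue_limit_general l κ γ R hκ hγ hR κ₁ κ₂ a₁ a₂ κ₁b κ₂b hκ₁b hnd hκ₂ hsum ha₁ νp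
    νm hνp hνm hsecp hsecm C D hC hD
end

section
/- Under the assumptions of the previous limit, the imaginary part of the hyperbolic eigenvalue satisfies lim_{η→η̄} Im ν±(ξ)/a₁²(η) = (γ²/2κ)·D²|ξ|²/(C² + |ξ|²D²) > 0 for each fixed |ξ| ≠ 0; in particular Im ν±(ξ) vanishes to the same order as a₁²(η) as η → η̄. -/
/-!
Write `g = w² / (ν² - c)` with `w = R a₁` and `c = R² κ₁` real. Taking imaginary parts in
`ν² = c + w² g⁻¹` gives `2 Re ν · Im ν = w² Im g⁻¹`, so `Im ν / a₁² = R² Im g⁻¹ / (2 Re ν)`.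
As `η → η̄`, `Re ν → ±R √κ₁(η̄)` and `g → C ∓ i D R`, whose inverse has imaginary part
`± D R / (C² + R² D²)`; with `γ² D √κ₁(η̄) = κ` this is the claimed limit, positive since `D > 0`.
-/

open Filter Complex Topology

lemma two_mul_re_mul_im_eq_sq_mul_im_inv (ν : ℂ) (c : ℝ) {w : ℝ} (hw : w ≠ 0) :
    2 * ν.re * ν.im = w ^ 2 * (((w : ℂ) ^ 2 / (ν ^ 2 - c))⁻¹).im := by
  rw [inv_div, ← ofReal_pow, div_ofReal_im, sub_im, ofReal_im, sub_zero,
    mul_div_cancel₀ _ (by positivity)]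
  simp only [sq, mul_im]
  ring

lemma tendsto_im_div_sq {ι : Type*} {l : Filter ι} {ν : ι → ℂ} {w c : ι → ℝ} {r : ℝ} {z : ℂ}
    (hr : r ≠ 0) (hz : z ≠ 0) (hν : Tendsto ν l (𝓝 (r : ℂ)))
    (hg : Tendsto (fun n => (w n : ℂ) ^ 2 / (ν n ^ 2 - c n)) l (𝓝 z)) :
    Tendsto (fun n => (ν n).im / w n ^ 2) l (𝓝 ((z⁻¹).im / (2 * r))) := by
  have hre : Tendsto (fun n => (ν n).re) l (𝓝 r) := by
    simpa [Function.comp_def] using (continuous_re.tendsto _).comp hν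
  have hlim : Tendsto (fun n => ((w n : ℂ) ^ 2 / (ν n ^ 2 - c n))⁻¹.im / (2 * (ν n).re)) l
      (𝓝 ((z⁻¹).im / (2 * r))) :=
    ((continuous_im.tendsto _).comp (hg.inv₀ hz)).div (hre.const_mul 2) (by simpa using hr)
  refine hlim.congr' ?_
  filter_upwards [hg.eventually_ne hz, hre.eventually_ne hr] with n hgn hren
  have hw : w n ≠ 0 := fun h => hgn (by simp [h])
  rw [div_eq_div_iff (by positivity) (by positivity)]
  linear_combination (two_mul_re_mul_im_eq_sq_mul_im_inv (ν n) (c n) hw).symm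

lemma im_inv_ofReal_add_I_mul (x y : ℝ) : ((x : ℂ) + I * y)⁻¹.im = -y / (x ^ 2 + y ^ 2) := by
  simp [inv_im, normSq_apply, sq]

lemma Filter.Tendsto.div_sq_of_div_const_mul_sq {ι : Type*} {l : Filter ι} {f a : ι → ℝ} {R x : ℝ}
    (hR : R ≠ 0) (h : Tendsto (fun n => f n / (R * a n) ^ 2) l (𝓝 x)) :
    Tendsto (fun n => f n / a n ^ 2) l (𝓝 (R ^ 2 * x)) := by
  refine (h.const_mul (R ^ 2)).congr fun n => ?_
  rw [mul_pow, mul_div_assoc', mul_div_mul_left _ _ (pow_ne_zero 2 hR)]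

theorem hyperbolic_eigenvalue_imaginary_part_general
    {ι : Type*} (l : Filter ι)
    (κ γ R : ℝ) (hκ : 0 < κ) (hγ : γ ≠ 0) (hR : 0 < R)
    (κ₁ a₁ : ι → ℝ) (κ₁b : ℝ)
    (hκ₁b : 0 < κ₁b)
    (νp νm : ι → ℂ)
    (hνp : Tendsto νp l (nhds ((R * Real.sqrt κ₁b : ℝ) : ℂ)))
    (hνm : Tendsto νm l (nhds ((-(R * Real.sqrt κ₁b) : ℝ) : ℂ)))
    (C D : ℝ)
    (hD : γ ^ 2 * D = κ / Real.sqrt κ₁b)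
    (hlimp : Tendsto
      (fun n => ((R * a₁ n : ℝ) : ℂ) ^ 2 / (νp n ^ 2 - (R ^ 2 * κ₁ n : ℝ)))
      l (nhds ((C : ℂ) - I * D * R)))
    (hlimm : Tendsto
      (fun n => ((R * a₁ n : ℝ) : ℂ) ^ 2 / (νm n ^ 2 - (R ^ 2 * κ₁ n : ℝ)))
      l (nhds ((C : ℂ) + I * D * R)))
    (L : ℝ)
    (hL : L = γ ^ 2 / (2 * κ) * (D ^ 2 * R ^ 2 / (C ^ 2 + R ^ 2 * D ^ 2))) :
    0 < L ∧
    Tendsto (fun n => (νp n).im / a₁ n ^ 2) l (nhds L) ∧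
    Tendsto (fun n => (νm n).im / a₁ n ^ 2) l (nhds L) := by
  set s := Real.sqrt κ₁b
  have hs : 0 < s := Real.sqrt_pos.2 hκ₁b
  have hκ_eq : κ = γ ^ 2 * D * s := by rw [hD]; field_simp
  have hDpos : 0 < D := by
    rw [show D = κ / s / γ ^ 2 by rw [eq_div_iff (by positivity)]; linear_combination hD]
    positivity
  have hL' : L = R ^ 2 * D / (2 * s * (C ^ 2 + R ^ 2 * D ^ 2)) := by
    rw [hL, hκ_eq]; field_simp
  have hp : (C : ℂ) - I * D * R = C + I * (-(D * R) : ℝ) := by push_cast; ring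
  have hm : (C : ℂ) + I * D * R = C + I * (D * R : ℝ) := by push_cast; ring
  have hz : ∀ y : ℝ, y ≠ 0 → (C : ℂ) + I * y ≠ 0 := fun y hy h =>
    hy (by simpa using congrArg im h)
  have hDR : D * R ≠ 0 := by positivity
  refine ⟨by rw [hL']; positivity, ?_, ?_⟩
  · rw [hp] at hlimp
    convert (tendsto_im_div_sq (by positivity) (hz _ (neg_ne_zero.2 hDR)) hνp hlimp
      ).div_sq_of_div_const_mul_sq hR.ne' using 2
    rw [im_inv_ofReal_add_I_mul, hL']; field_simp
  · rw [hm] at hlimm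
    convert (tendsto_im_div_sq (neg_ne_zero.2 (by positivity)) (hz _ hDR) hνm hlimm
      ).div_sq_of_div_const_mul_sq hR.ne' using 2
    rw [im_inv_ofReal_add_I_mul, hL']; field_simp

/-- The imaginary part of the hyperbolic eigenvalue satisfies
`Im ν±(ξ)/a₁²(η) → (γ²/2κ)·D²|ξ|²/(C² + |ξ|²D²) > 0` as `η → η̄`, so it vanishes
to the same order as `a₁²(η)`. -/
theorem hyperbolic_eigenvalue_imaginary_part
    {ι : Type*} (l : Filter ι) [l.NeBot]
    (κ γ R : ℝ) (hκ : 0 < κ) (hγ : γ ≠ 0) (hR : 0 < R)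
    (κ₁ κ₂ a₁ a₂ : ι → ℝ) (κ₁b κ₂b : ℝ)
    (hκ₁b : 0 < κ₁b) (hκ₂b : 0 < κ₂b) (hnd : κ₁b ≠ κ₂b)
    (hκ₁ : Tendsto κ₁ l (nhds κ₁b)) (hκ₂ : Tendsto κ₂ l (nhds κ₂b))
    (hsum : ∀ n, a₁ n ^ 2 + a₂ n ^ 2 = 1)
    (ha₁0 : ∀ n, a₁ n ≠ 0)
    (ha₁ : Tendsto a₁ l (nhds 0))
    (νp νm : ι → ℂ)
    (hνp : Tendsto νp l (nhds ((R * Real.sqrt κ₁b : ℝ) : ℂ)))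
    (hνm : Tendsto νm l (nhds ((-(R * Real.sqrt κ₁b) : ℝ) : ℂ)))
    (C D : ℝ)
    (hC : γ ^ 2 * C = 1 - γ ^ 2 / (κ₁b - κ₂b))
    (hD : γ ^ 2 * D = κ / Real.sqrt κ₁b)
    (hlimp : Tendsto
      (fun n => ((R * a₁ n : ℝ) : ℂ) ^ 2 / (νp n ^ 2 - (R ^ 2 * κ₁ n : ℝ)))
      l (nhds ((C : ℂ) - I * D * R)))
    (hlimm : Tendsto
      (fun n => ((R * a₁ n : ℝ) : ℂ) ^ 2 / (νm n ^ 2 - (R ^ 2 * κ₁ n : ℝ)))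
      l (nhds ((C : ℂ) + I * D * R)))
    (L : ℝ)
    (hL : L = γ ^ 2 / (2 * κ) * (D ^ 2 * R ^ 2 / (C ^ 2 + R ^ 2 * D ^ 2))) :
    0 < L ∧
    Tendsto (fun n => (νp n).im / a₁ n ^ 2) l (nhds L) ∧
    Tendsto (fun n => (νm n).im / a₁ n ^ 2) l (nhds L) :=
  hyperbolic_eigenvalue_imaginary_part_general l κ γ R hκ hγ hR κ₁ a₁ κ₁b hκ₁b νp νm hνp hνm C D hD
    hlimp hlimm L hL
end

section
/- With δ₋(ξ) as above, taken to be the branch satisfying δ₋(ξ̄) = ω₁(ξ̄) at the degenerate direction, one has lim_{η→η̄} (ω₁(ξ) − δ₋(ξ))/(ω₁(ξ) − ω₂(ξ)) = a₁²(η̄) for fixed |ξ|, assuming ω₁(ξ) − ω₂(ξ) → 0 as η → η̄ with ω₁ ≠ ω₂ for η ≠ η̄ near η̄. -/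
open Filter Complex Topology

/-- Near an isolated degenerate direction `η̄` (`ω₁(η̄) = ω₂(η̄)`), the branch `δ₋`
of the eigenvalue of the `2×2` block satisfying `δ₋ = ω₁` at `η̄` satisfies
`(ω₁ − δ₋)/(ω₁ − ω₂) → a₁²(η̄)` as `η → η̄` for fixed `|ξ|`. -/
theorem degenerate_direction_limit
    {ι : Type*} (l : Filter ι) [l.NeBot]
    (κ γ : ℝ) (hκ : 0 < κ) (hγ : γ ≠ 0)
    (ω₁ ω₂ a₁ a₂ : ι → ℝ) (ωb a₁b : ℝ)
    (hω₁ : Tendsto ω₁ l (nhds ωb)) (hω₂ : Tendsto ω₂ l (nhds ωb))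
    (hωne : ∀ n, ω₁ n ≠ ω₂ n)
    (hsum : ∀ n, a₁ n ^ 2 + a₂ n ^ 2 = 1)
    (ha₁ : Tendsto a₁ l (nhds a₁b))
    (w : ι → ℂ)
    (hw : ∀ n, w n ^ 2 = ((ω₁ n : ℂ) - ω₂ n) ^ 2 / 4 - γ ^ 4 / (16 * κ ^ 2)
        + I * γ ^ 2 * ((ω₁ n : ℂ) - ω₂ n) * ((a₁ n : ℂ) ^ 2 - (a₂ n : ℂ) ^ 2) / (4 * κ))
    (hwbranch : Tendsto w l (nhds (I * γ ^ 2 / (4 * κ))))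
    (δm : ι → ℂ)
    (hδm : ∀ n, δm n = ((ω₁ n : ℂ) + ω₂ n) / 2 + I * γ ^ 2 / (4 * κ) - w n) :
    Tendsto (fun n => ((ω₁ n : ℂ) - δm n) / ((ω₁ n : ℂ) - ω₂ n)) l
      (nhds ((a₁b : ℂ) ^ 2)) := by
  have hκ' : (κ : ℂ) ≠ 0 := by exact_mod_cast hκ.ne'
  have hγ' : (γ : ℂ) ≠ 0 := by exact_mod_cast hγ
  set c : ℂ := I * γ ^ 2 / (4 * κ) with hc
  have hc0 : c ≠ 0 := by
    rw [hc]
    apply div_ne_zero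
    · exact mul_ne_zero I_ne_zero (pow_ne_zero 2 hγ')
    · exact mul_ne_zero (by norm_num) hκ'
  have h2c : (2 : ℂ) * c ≠ 0 := mul_ne_zero two_ne_zero hc0
  -- complex difference tends to 0
  have hdre : Tendsto (fun n => ω₁ n - ω₂ n) l (nhds 0) := by
    simpa using hω₁.sub hω₂
  have hd : Tendsto (fun n => ((ω₁ n : ℂ) - ω₂ n)) l (nhds 0) := by
    have := (Complex.continuous_ofReal.tendsto 0).comp hdre
    simpa [Function.comp_def] using this
  -- a₂ squared tends
  have ha₂sq : Tendsto (fun n => (a₂ n) ^ 2) l (nhds (1 - a₁b ^ 2)) := by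
    have he : (fun n => (a₂ n) ^ 2) = fun n => 1 - (a₁ n) ^ 2 := by
      funext n; have := hsum n; linarith
    rw [he]
    exact tendsto_const_nhds.sub (ha₁.pow 2)
  have hA : Tendsto (fun n => ((a₁ n : ℂ)) ^ 2 - ((a₂ n : ℂ)) ^ 2) l
      (nhds ((2 : ℂ) * a₁b ^ 2 - 1)) := by
    have h1 : Tendsto (fun n => ((a₁ n : ℂ)) ^ 2) l (nhds ((a₁b : ℂ) ^ 2)) := by
      have := (Complex.continuous_ofReal.tendsto a₁b).comp ha₁
      exact ((by simpa [Function.comp_def] using this : Tendsto (fun n => ((a₁ n : ℂ))) l (nhds (a₁b : ℂ))).pow 2)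
    have h2 : Tendsto (fun n => ((a₂ n : ℂ)) ^ 2) l (nhds (1 - (a₁b : ℂ) ^ 2)) := by
      have := (Complex.continuous_ofReal.tendsto _).comp ha₂sq
      simpa [Function.comp_def] using this
    have := h1.sub h2
    convert this using 1
    ring
  -- w + c tends to 2c
  have hwc : Tendsto (fun n => w n + c) l (nhds ((2 : ℂ) * c)) := by
    have := hwbranch.add (tendsto_const_nhds (x := c))
    rw [hc]
    convert this using 1
    simp only [hc]; ring
  have hne : ∀ᶠ n in l, w n + c ≠ 0 := hwc.eventually_ne h2c
  -- the auxiliary function and its limit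
  have hN : Tendsto (fun n => ((ω₁ n : ℂ) - ω₂ n) / 4
      + I * γ ^ 2 * (((a₁ n : ℂ)) ^ 2 - ((a₂ n : ℂ)) ^ 2) / (4 * κ)) l
      (nhds (I * γ ^ 2 * ((2 : ℂ) * a₁b ^ 2 - 1) / (4 * κ))) := by
    have h1 := (hd.div_const 4)
    have h2 : Tendsto (fun n => I * γ ^ 2 * (((a₁ n : ℂ)) ^ 2 - ((a₂ n : ℂ)) ^ 2) / (4 * κ)) l
        (nhds (I * γ ^ 2 * ((2 : ℂ) * a₁b ^ 2 - 1) / (4 * κ))) :=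
      ((hA.const_mul (I * γ ^ 2)).div_const (4 * κ))
    have := h1.add h2
    simpa using this
  have hF : Tendsto (fun n => (1 : ℂ) / 2 + (((ω₁ n : ℂ) - ω₂ n) / 4
      + I * γ ^ 2 * (((a₁ n : ℂ)) ^ 2 - ((a₂ n : ℂ)) ^ 2) / (4 * κ)) / (w n + c)) l
      (nhds ((a₁b : ℂ) ^ 2)) := by
    have := tendsto_const_nhds (x := (1 : ℂ) / 2) (f := l) |>.add (hN.div hwc h2c)
    convert this using 2
    · rfl
    rw [hc]
    field_simp
    ring
  refine hF.congr' ?_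
  filter_upwards [hne] with n hn
  have hdn : ((ω₁ n : ℂ) - ω₂ n) ≠ 0 := by
    rw [sub_ne_zero]
    exact_mod_cast hωne n
  have key : (w n - c) * (w n + c) = ((ω₁ n : ℂ) - ω₂ n) *
      (((ω₁ n : ℂ) - ω₂ n) / 4 + I * γ ^ 2 * (((a₁ n : ℂ)) ^ 2 - ((a₂ n : ℂ)) ^ 2) / (4 * κ)) := by
    rw [hc]
    linear_combination hw n - ((γ : ℂ) ^ 4 / (16 * (κ : ℂ) ^ 2)) * Complex.I_sq
  rw [hδm n]
  have : ((ω₁ n : ℂ) - (((ω₁ n : ℂ) + ω₂ n) / 2 + I * γ ^ 2 / (4 * κ) - w n))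
      = ((ω₁ n : ℂ) - ω₂ n) / 2 + (w n - c) := by
    rw [hc]; ring
  have hwcd : (w n - c) / ((ω₁ n : ℂ) - ω₂ n)
      = (((ω₁ n : ℂ) - ω₂ n) / 4
        + I * γ ^ 2 * (((a₁ n : ℂ)) ^ 2 - ((a₂ n : ℂ)) ^ 2) / (4 * κ)) / (w n + c) := by
    rw [div_eq_div_iff hdn hn]
    linear_combination key
  have hsplit : (((ω₁ n : ℂ) - ω₂ n) / 2 + (w n - c)) / ((ω₁ n : ℂ) - ω₂ n)
      = 1 / 2 + (w n - c) / ((ω₁ n : ℂ) - ω₂ n) := by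
    field_simp
  rw [this, hsplit, hwcd]
end

section
/- For constants C > 0, c > 0, ε > 0 and ℓ ≥ 1 a natural number, the double integral ∫₀^c ∫_{−ε}^{ε} e^{−C t φ^{2ℓ} s²} dφ · s ds is bounded by K t^{−1/(2ℓ)} for all t ≥ 1, for some constant K depending only on C, c, ε, ℓ. -/
/-!
Folding the inner integral onto `(0, ∞)` and rescaling `φ ↦ a^{-1/(2ℓ)} φ` gives
`∫_{-ε}^{ε} e^{-a φ^{2ℓ}} dφ ≤ 2 Γ(1 + 1/(2ℓ)) a^{-1/(2ℓ)}` uniformly in `ε`. With `a = C t s²`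
the outer integrand is then at most a constant times `t^{-1/(2ℓ)} s^{1 - 1/ℓ}`, and the exponent
`1 - 1/ℓ` is `> -1`, so `∫₀^c s^{1 - 1/ℓ} ds` is finite.
-/

open Real MeasureTheory Set

lemma intervalIntegral_neg_eq_two_mul_of_even {f : ℝ → ℝ} (hf : Continuous f)
    (heven : ∀ x, f (-x) = f x) (a : ℝ) :
    ∫ x in -a..a, f x = 2 * ∫ x in 0..a, f x := by
  have hleft : ∫ x in -a..0, f x = ∫ x in 0..a, f x := by
    simpa only [heven, neg_zero] using (intervalIntegral.integral_comp_neg (a := 0) (b := a) f).symm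
  rw [← intervalIntegral.integral_add_adjacent_intervals (hf.intervalIntegrable _ _)
    (hf.intervalIntegrable _ _), hleft, two_mul]

lemma intervalIntegral_exp_neg_mul_rpow_le {p b R : ℝ} (hp : 0 < p) (hb : 0 < b) (hR : 0 ≤ R) :
    ∫ x in 0..R, exp (-b * x ^ p) ≤ b ^ (-1 / p) * Gamma (1 / p + 1) := by
  have hint : IntegrableOn (fun x : ℝ => exp (-b * x ^ p)) (Ioi 0) := by
    simpa using integrableOn_rpow_mul_exp_neg_mul_rpow neg_one_lt_zero hp hb
  rw [← integral_exp_neg_mul_rpow hp hb, intervalIntegral.integral_of_le hR]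
  exact setIntegral_mono_set hint (ae_of_all _ fun _ => (exp_pos _).le)
    Ioc_subset_Ioi_self.eventuallyLE

lemma intervalIntegral_exp_neg_mul_pow_even_le {b ε : ℝ} (hb : 0 < b) (hε : 0 ≤ ε) {n : ℕ}
    (hn : n ≠ 0) :
    ∫ φ in -ε..ε, exp (-b * φ ^ (2 * n)) ≤
      2 * Gamma (1 / (2 * n : ℝ) + 1) * b ^ (-(1 : ℝ) / (2 * n)) := by
  have hp : (0 : ℝ) < 2 * n := by positivity
  have hrpow : ∫ φ in 0..ε, exp (-b * φ ^ (2 * n)) = ∫ φ in 0..ε, exp (-b * φ ^ ((2 * n : ℝ))) :=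
    intervalIntegral.integral_congr fun φ hφ => by
      rw [uIcc_of_le hε] at hφ
      simp only [← rpow_natCast φ, Nat.cast_mul, Nat.cast_ofNat]
  rw [intervalIntegral_neg_eq_two_mul_of_even (by fun_prop) (fun φ => by simp [pow_mul]), hrpow,
    mul_assoc, mul_comm (Gamma _)]
  gcongr
  exact intervalIntegral_exp_neg_mul_rpow_le hp hb hε

lemma rpow_sq_mul_self {s : ℝ} (hs : 0 < s) (q : ℝ) : (s ^ 2) ^ q * s = s ^ (2 * q + 1) := by
  rw [← rpow_natCast, ← rpow_mul hs.le, rpow_add_one hs.ne', Nat.cast_ofNat]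

lemma intervalIntegral_exp_neg_mul_pow_even_mul_sq_mul_le {C t ε s : ℝ} (hC : 0 < C) (ht : 0 < t)
    (hε : 0 ≤ ε) (hs : 0 < s) {n : ℕ} (hn : n ≠ 0) :
    (∫ φ in -ε..ε, exp (-C * t * φ ^ (2 * n) * s ^ 2)) * s ≤
      2 * Gamma (1 / (2 * n : ℝ) + 1) * C ^ (-(1 : ℝ) / (2 * n)) * t ^ (-(1 : ℝ) / (2 * n)) *
        s ^ (2 * (-(1 : ℝ) / (2 * n)) + 1) := by
  calc (∫ φ in -ε..ε, exp (-C * t * φ ^ (2 * n) * s ^ 2)) * s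
      = (∫ φ in -ε..ε, exp (-(C * t * s ^ 2) * φ ^ (2 * n))) * s := by
        congr 2 with φ
        ring_nf
    _ ≤ 2 * Gamma (1 / (2 * n : ℝ) + 1) * (C * t * s ^ 2) ^ (-(1 : ℝ) / (2 * n)) * s := by
        gcongr
        exact intervalIntegral_exp_neg_mul_pow_even_le (by positivity) hε hn
    _ = _ := by
        rw [mul_rpow (by positivity) (by positivity), mul_rpow hC.le ht.le,
          ← rpow_sq_mul_self hs]
        ring

/-- The integral estimate
`∫₀^c ∫_{−ε}^{ε} e^{−Ctφ^{2ℓ}s²} dφ · s ds ≤ K t^{−1/(2ℓ)}` for all `t ≥ 1`. -/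
theorem hyperbolic_integral_decay
    (C c ε : ℝ) (hC : 0 < C) (hc : 0 < c) (hε : 0 < ε)
    (ℓ : ℕ) (hℓ : 1 ≤ ℓ) :
    ∃ K : ℝ, ∀ t : ℝ, 1 ≤ t →
      ∫ s in (0 : ℝ)..c,
          (∫ φ in (-ε : ℝ)..ε, Real.exp (-C * t * φ ^ (2 * ℓ) * s ^ 2)) * s ≤
        K * t ^ (-(1 : ℝ) / (2 * ℓ)) := by
  set q : ℝ := -(1 : ℝ) / (2 * ℓ)
  set A : ℝ := 2 * Gamma (1 / (2 * ℓ : ℝ) + 1)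
  have hq : -1 < 2 * q + 1 := by
    have : 1 / (2 * ℓ : ℝ) ≤ 1 / 2 := by
      gcongr
      linarith [show (1 : ℝ) ≤ ℓ by exact_mod_cast hℓ]
    simp only [q, neg_div]
    linarith
  refine ⟨A * C ^ q * ∫ s in (0 : ℝ)..c, s ^ (2 * q + 1), fun t ht => ?_⟩
  have hinner_cont : Continuous fun s =>
      (∫ φ in (-ε : ℝ)..ε, Real.exp (-C * t * φ ^ (2 * ℓ) * s ^ 2)) * s :=
    (intervalIntegral.continuous_parametric_intervalIntegral_of_continuous'
      (by fun_prop) _ _).mul continuous_id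
  calc _ ≤ ∫ s in (0 : ℝ)..c, A * C ^ q * t ^ q * s ^ (2 * q + 1) :=
        intervalIntegral.integral_mono_on_of_le_Ioo hc.le (hinner_cont.intervalIntegrable _ _)
          ((intervalIntegral.intervalIntegrable_rpow' hq).const_mul _) fun s hs =>
          intervalIntegral_exp_neg_mul_pow_even_mul_sq_mul_le hC (by linarith) hε.le hs.1
            (by omega)
    _ = _ := by rw [intervalIntegral.integral_const_mul]; ring
end
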